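/- arXiv:1605.03858 — 5 statements merged into one kernel-verified Lean document; each statement's English description precedes it below -/
import Mathlib

section
/- Let (K^{•,•}, d', d'') be a bounded double cochain complex of modules with total differential D = d' + d''. Then K satisfies Ker(d') ∩ Ker(d'') ∩ Im(D) = Im(d'd'') if and only if Ker(d'') ∩ Im(d') = Im(d'd'') and Ker(d') ∩ Im(d'') = Im(d'd''). -/
/- STATEMENT 0: For a bounded double cochain complex (K, d', d'') of modules with
total differential D = d' + d'', the d'd''-lemma
(Ker d' ∩ Ker d'' ∩ Im D = Im(d'd'')) holds iff
Ker d'' ∩ Im d' = Im(d'd'') and Ker d' ∩ Im d'' = Im(d'd''). -/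
theorem deligne_lemma_equiv_1 {R V : Type*} [CommRing R] [AddCommGroup V] [Module R V]
    (𝒦 : ℤ × ℤ → Submodule R V)
    (hinternal : DirectSum.IsInternal 𝒦)
    (hbounded : {pq : ℤ × ℤ | 𝒦 pq ≠ ⊥}.Finite)
    (d' d'' : V →ₗ[R] V)
    (hd'deg : ∀ p q : ℤ, ∀ x ∈ 𝒦 (p, q), d' x ∈ 𝒦 (p + 1, q))
    (hd''deg : ∀ p q : ℤ, ∀ x ∈ 𝒦 (p, q), d'' x ∈ 𝒦 (p, q + 1))
    (hd'sq : d' ∘ₗ d' = 0) (hd''sq : d'' ∘ₗ d'' = 0)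
    (hanti : d' ∘ₗ d'' + d'' ∘ₗ d' = 0) :
    (LinearMap.ker d' ⊓ LinearMap.ker d'' ⊓ LinearMap.range (d' + d'') =
        LinearMap.range (d' ∘ₗ d'')) ↔
      (LinearMap.ker d'' ⊓ LinearMap.range d' = LinearMap.range (d' ∘ₗ d'') ∧
        LinearMap.ker d' ⊓ LinearMap.range d'' = LinearMap.range (d' ∘ₗ d'')) := by
  classical
  haveI : DirectSum.Decomposition 𝒦 := hinternal.chooseDecomposition
  -- pointwise versions of the algebraic identities
  have hd'sq' : ∀ v : V, d' (d' v) = 0 := fun v => by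
    simpa using LinearMap.congr_fun hd'sq v
  have hd''sq' : ∀ v : V, d'' (d'' v) = 0 := fun v => by
    simpa using LinearMap.congr_fun hd''sq v
  have hanti' : ∀ v : V, d' (d'' v) = - d'' (d' v) := fun v => by
    have h := LinearMap.congr_fun hanti v
    simp only [LinearMap.add_apply, LinearMap.comp_apply, LinearMap.zero_apply] at h
    exact eq_neg_of_add_eq_zero_left h
  have hanti'' : ∀ v : V, d'' (d' v) = - d' (d'' v) := fun v => by
    rw [hanti' v, neg_neg]
  -- degree conditions in uniform form
  have hd's : ∀ j : ℤ × ℤ, ∀ v ∈ 𝒦 j, d' v ∈ 𝒦 (j + (1, 0)) := by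
    rintro ⟨p, q⟩ v hv
    simpa [Prod.ext_iff] using hd'deg p q v hv
  have hd''s : ∀ j : ℤ × ℤ, ∀ v ∈ 𝒦 j, d'' v ∈ 𝒦 (j + (0, 1)) := by
    rintro ⟨p, q⟩ v hv
    simpa [Prod.ext_iff] using hd''deg p q v hv
  -- commutation of the decomposition with a graded map
  have hcomm : ∀ (f : V →ₗ[R] V) (s : ℤ × ℤ),
      (∀ j : ℤ × ℤ, ∀ v ∈ 𝒦 j, f v ∈ 𝒦 (j + s)) →
      ∀ (i : ℤ × ℤ) (v : V),
        (DirectSum.decompose 𝒦 (f v) (i + s) : V) = f (DirectSum.decompose 𝒦 v i : V) := by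
    intro f s hf i
    refine DirectSum.Decomposition.inductionOn 𝒦 ?_ ?_ ?_
    · simp [DirectSum.decompose_zero]
    · intro j m
      by_cases hij : j = i
      · subst hij
        rw [DirectSum.decompose_of_mem_same 𝒦 (hf j m m.2),
          DirectSum.decompose_of_mem_same 𝒦 m.2]
      · rw [DirectSum.decompose_of_mem_ne 𝒦 (hf j m m.2)
            (fun h => hij (by exact add_right_cancel h)),
          DirectSum.decompose_of_mem_ne 𝒦 m.2 hij, map_zero]
    · intro a b ha hb
      rw [map_add, DirectSum.decompose_add, DirectSum.decompose_add, DirectSum.add_apply,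
        DirectSum.add_apply, Submodule.coe_add, Submodule.coe_add, ha, hb, map_add]
  -- easy inclusions
  have hr1 : LinearMap.range (d' ∘ₗ d'') ≤ LinearMap.ker d'' ⊓ LinearMap.range d' := by
    rintro x ⟨w, rfl⟩
    exact ⟨by simp [LinearMap.mem_ker, hanti'' (d'' w), hd''sq' w], ⟨d'' w, rfl⟩⟩
  have hr2 : LinearMap.range (d' ∘ₗ d'') ≤ LinearMap.ker d' ⊓ LinearMap.range d'' := by
    rintro x ⟨w, rfl⟩
    refine ⟨by simp [LinearMap.mem_ker, hd'sq' (d'' w)], ⟨-(d' w), ?_⟩⟩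
    simp [hanti' w]
  have hr3 : LinearMap.range (d' ∘ₗ d'') ≤
      LinearMap.ker d' ⊓ LinearMap.ker d'' ⊓ LinearMap.range (d' + d'') := by
    rintro x ⟨w, rfl⟩
    refine ⟨⟨by simp [LinearMap.mem_ker, hd'sq' (d'' w)],
      by simp [LinearMap.mem_ker, hanti'' (d'' w), hd''sq' w]⟩, ⟨d'' w, ?_⟩⟩
    simp [LinearMap.add_apply, hd''sq' w]
  -- component of d'd'' w
  have hddcomp : ∀ (w : V) (i : ℤ × ℤ),
      (DirectSum.decompose 𝒦 (d' (d'' w)) i : V) =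
        d' (d'' (DirectSum.decompose 𝒦 w (i - (1, 0) - (0, 1)) : V)) := by
    intro w i
    have h1 : i - (1, 0) + (1, 0) = i := by abel
    have h2 : i - (1, 0) - (0, 1) + (0, 1) = i - (1, 0) := by abel
    calc (DirectSum.decompose 𝒦 (d' (d'' w)) i : V)
        = (DirectSum.decompose 𝒦 (d' (d'' w)) (i - (1, 0) + (1, 0)) : V) := by rw [h1]
      _ = d' (DirectSum.decompose 𝒦 (d'' w) (i - (1, 0)) : V) := hcomm d' (1, 0) hd's _ _
      _ = d' (DirectSum.decompose 𝒦 (d'' w) (i - (1, 0) - (0, 1) + (0, 1)) : V) := by rw [h2]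
      _ = d' (d'' (DirectSum.decompose 𝒦 w (i - (1, 0) - (0, 1)) : V)) := by
          rw [hcomm d'' (0, 1) hd''s _ _]
  have hne2 : ∀ i : ℤ × ℤ, i - ((1 : ℤ), (0 : ℤ)) + (0, 1) ≠ i := by
    intro i hcon
    have h1 : i.1 - 1 + 0 = i.1 := congrArg Prod.fst hcon
    omega
  have hne3 : ∀ i : ℤ × ℤ, i - ((0 : ℤ), (1 : ℤ)) + (1, 0) ≠ i := by
    intro i hcon
    have h1 : i.2 - 1 + 0 = i.2 := congrArg Prod.snd hcon
    omega
  constructor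
  · -- forward direction
    intro h
    constructor
    · -- ker d'' ⊓ range d' = range (d' ∘ₗ d'')
      refine le_antisymm ?_ hr1
      rintro x ⟨hx2, y, rfl⟩
      rw [SetLike.mem_coe, LinearMap.mem_ker] at hx2
      rw [← DirectSum.sum_support_decompose 𝒦 (d' y)]
      apply Submodule.sum_mem
      intro i _
      set y' : V := (DirectSum.decompose 𝒦 y (i - (1, 0)) : V) with hy'
      have hi : i - (1, 0) + (1, 0) = i := by abel
      have hx' : (DirectSum.decompose 𝒦 (d' y) i : V) = d' y' := by
        rw [← hi]; exact hcomm d' (1, 0) hd's _ _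
      have hdx' : d'' (d' y') = 0 := by
        rw [← hx', ← hcomm d'' (0, 1) hd''s i (d' y), hx2]
        simp [DirectSum.decompose_zero]
      have hy'mem : y' ∈ 𝒦 (i - (1, 0)) := SetLike.coe_mem _
      have hu : d' y' + d'' y' ∈
          LinearMap.ker d' ⊓ LinearMap.ker d'' ⊓ LinearMap.range (d' + d'') := by
        refine ⟨⟨?_, ?_⟩, ⟨y', by simp [LinearMap.add_apply]⟩⟩
        · rw [SetLike.mem_coe, LinearMap.mem_ker, map_add, hd'sq' y', hanti' y', hdx']
          simp
        · rw [SetLike.mem_coe, LinearMap.mem_ker, map_add, hd''sq' y', hdx']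
          simp
      rw [h] at hu
      obtain ⟨w, hw⟩ := hu
      refine ⟨(DirectSum.decompose 𝒦 w (i - (1, 0) - (0, 1)) : V), ?_⟩
      have h5 : (DirectSum.decompose 𝒦 (d' y' + d'' y') i : V) = d' y' := by
        rw [DirectSum.decompose_add, DirectSum.add_apply, Submodule.coe_add,
          DirectSum.decompose_of_mem_same 𝒦 (by rw [← hi]; exact hd's _ _ hy'mem),
          DirectSum.decompose_of_mem_ne 𝒦 (hd''s _ _ hy'mem) (hne2 i), add_zero]
      calc (d' ∘ₗ d'') (DirectSum.decompose 𝒦 w (i - (1, 0) - (0, 1)) : V)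
          = d' (d'' (DirectSum.decompose 𝒦 w (i - (1, 0) - (0, 1)) : V)) := rfl
        _ = (DirectSum.decompose 𝒦 (d' (d'' w)) i : V) := (hddcomp w i).symm
        _ = (DirectSum.decompose 𝒦 (d' y' + d'' y') i : V) := by
            rw [show d' (d'' w) = d' y' + d'' y' from hw]
        _ = d' y' := h5
        _ = (DirectSum.decompose 𝒦 (d' y) i : V) := hx'.symm
    · -- ker d' ⊓ range d'' = range (d' ∘ₗ d'')
      refine le_antisymm ?_ hr2
      rintro x ⟨hx2, y, rfl⟩
      rw [SetLike.mem_coe, LinearMap.mem_ker] at hx2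
      rw [← DirectSum.sum_support_decompose 𝒦 (d'' y)]
      apply Submodule.sum_mem
      intro i _
      set y' : V := (DirectSum.decompose 𝒦 y (i - (0, 1)) : V) with hy'
      have hi : i - (0, 1) + (0, 1) = i := by abel
      have hx' : (DirectSum.decompose 𝒦 (d'' y) i : V) = d'' y' := by
        rw [← hi]; exact hcomm d'' (0, 1) hd''s _ _
      have hdx' : d' (d'' y') = 0 := by
        rw [← hx', ← hcomm d' (1, 0) hd's i (d'' y), hx2]
        simp [DirectSum.decompose_zero]
      have hy'mem : y' ∈ 𝒦 (i - (0, 1)) := SetLike.coe_mem _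
      have hu : d' y' + d'' y' ∈
          LinearMap.ker d' ⊓ LinearMap.ker d'' ⊓ LinearMap.range (d' + d'') := by
        refine ⟨⟨?_, ?_⟩, ⟨y', by simp [LinearMap.add_apply]⟩⟩
        · rw [SetLike.mem_coe, LinearMap.mem_ker, map_add, hd'sq' y', hdx']
          simp
        · rw [SetLike.mem_coe, LinearMap.mem_ker, map_add, hd''sq' y', hanti'' y', hdx']
          simp
      rw [h] at hu
      obtain ⟨w, hw⟩ := hu
      refine ⟨(DirectSum.decompose 𝒦 w (i - (1, 0) - (0, 1)) : V), ?_⟩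
      have h5 : (DirectSum.decompose 𝒦 (d' y' + d'' y') i : V) = d'' y' := by
        rw [DirectSum.decompose_add, DirectSum.add_apply, Submodule.coe_add,
          DirectSum.decompose_of_mem_ne 𝒦 (hd's _ _ hy'mem) (hne3 i),
          DirectSum.decompose_of_mem_same 𝒦 (by rw [← hi]; exact hd''s _ _ hy'mem), zero_add]
      calc (d' ∘ₗ d'') (DirectSum.decompose 𝒦 w (i - (1, 0) - (0, 1)) : V)
          = d' (d'' (DirectSum.decompose 𝒦 w (i - (1, 0) - (0, 1)) : V)) := rfl
        _ = (DirectSum.decompose 𝒦 (d' (d'' w)) i : V) := (hddcomp w i).symm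
        _ = (DirectSum.decompose 𝒦 (d' y' + d'' y') i : V) := by
            rw [show d' (d'' w) = d' y' + d'' y' from hw]
        _ = d'' y' := h5
        _ = (DirectSum.decompose 𝒦 (d'' y) i : V) := hx'.symm
  · -- backward direction
    rintro ⟨h1, h2⟩
    refine le_antisymm ?_ hr3
    rintro x ⟨⟨hk1, hk2⟩, y, rfl⟩
    rw [SetLike.mem_coe, LinearMap.mem_ker, LinearMap.add_apply, map_add] at hk1 hk2
    rw [hd'sq' y] at hk1
    rw [hd''sq' y] at hk2
    have hc1 : d'' (d' y) = 0 := by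
      have := hanti' y
      rw [this] at hk1
      simpa using hk2
    have hc2 : d' (d'' y) = 0 := by
      rw [hanti' y, hc1, neg_zero]
    have hm1 : d' y ∈ LinearMap.range (d' ∘ₗ d'') := by
      rw [← h1]; exact ⟨hc1, ⟨y, rfl⟩⟩
    have hm2 : d'' y ∈ LinearMap.range (d' ∘ₗ d'') := by
      rw [← h2]; exact ⟨hc2, ⟨y, rfl⟩⟩
    obtain ⟨w1, hw1⟩ := hm1
    obtain ⟨w2, hw2⟩ := hm2
    refine ⟨w1 + w2, ?_⟩
    rw [map_add, hw1, hw2]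
    simp [LinearMap.add_apply]
end

section
/- Let (K^{•,•}, d', d'') be a bounded double cochain complex of modules with total differential D = d' + d''. Then K satisfies the d'd''-lemma if and only if Im(d') + Im(d'') + Ker(D) = Ker(d'd''). -/
/- STATEMENT 2: An equivalent characterization of the d'd''-lemma for a bounded
double cochain complex (K, d', d'') of modules with total differential D = d' + d''. -/
theorem deligne_lemma_equiv_2 {R V : Type*} [CommRing R] [AddCommGroup V] [Module R V]
    (𝒦 : ℤ × ℤ → Submodule R V)
    (hinternal : DirectSum.IsInternal 𝒦)
    (hbounded : {pq : ℤ × ℤ | 𝒦 pq ≠ ⊥}.Finite)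
    (d' d'' : V →ₗ[R] V)
    (hd'deg : ∀ p q : ℤ, ∀ x ∈ 𝒦 (p, q), d' x ∈ 𝒦 (p + 1, q))
    (hd''deg : ∀ p q : ℤ, ∀ x ∈ 𝒦 (p, q), d'' x ∈ 𝒦 (p, q + 1))
    (hd'sq : d' ∘ₗ d' = 0) (hd''sq : d'' ∘ₗ d'' = 0)
    (hanti : d' ∘ₗ d'' + d'' ∘ₗ d' = 0) :
    (LinearMap.ker d' ⊓ LinearMap.ker d'' ⊓ LinearMap.range (d' + d'') =
        LinearMap.range (d' ∘ₗ d'')) ↔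
      (LinearMap.range d' ⊔ LinearMap.range d'' ⊔ LinearMap.ker (d' + d'') = LinearMap.ker (d' ∘ₗ d'')) := by
  have h1 : ∀ x, d' (d' x) = 0 := fun x => LinearMap.congr_fun hd'sq x
  have h2 : ∀ x, d'' (d'' x) = 0 := fun x => LinearMap.congr_fun hd''sq x
  have comm : ∀ x, d'' (d' x) = - d' (d'' x) := by
    intro x
    have := LinearMap.congr_fun hanti x
    simp only [LinearMap.add_apply, LinearMap.comp_apply, LinearMap.zero_apply] at this
    exact eq_neg_of_add_eq_zero_left (by rw [add_comm]; exact this)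
  -- trivial inclusion 1 : Im d'd'' ⊆ Ker d' ∩ Ker d'' ∩ Im D
  have incl1 : LinearMap.range (d' ∘ₗ d'') ≤
      LinearMap.ker d' ⊓ LinearMap.ker d'' ⊓ LinearMap.range (d' + d'') := by
    rintro _ ⟨x, rfl⟩
    refine ⟨⟨?_, ?_⟩, ⟨d'' x, ?_⟩⟩
    · simp [LinearMap.mem_ker, LinearMap.comp_apply, h1]
    · simp [LinearMap.mem_ker, LinearMap.comp_apply, comm, h2]
    · simp [LinearMap.add_apply, LinearMap.comp_apply, h2]
  -- trivial inclusion 2 : Im d' + Im d'' + Ker D ⊆ Ker d'd''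
  have incl2 : LinearMap.range d' ⊔ LinearMap.range d'' ⊔ LinearMap.ker (d' + d'') ≤
      LinearMap.ker (d' ∘ₗ d'') := by
    refine sup_le (sup_le ?_ ?_) ?_
    · rintro _ ⟨x, rfl⟩
      have : d'' (d' x) = - d' (d'' x) := comm x
      simp only [LinearMap.mem_ker, LinearMap.comp_apply, this, map_neg, h1, neg_zero]
    · rintro _ ⟨x, rfl⟩
      simp [LinearMap.mem_ker, LinearMap.comp_apply, h2]
    · intro x hx
      have hD : d' x + d'' x = 0 := by
        simpa [LinearMap.add_apply] using hx
      have : d'' x = - d' x := eq_neg_of_add_eq_zero_left (by rw [add_comm]; exact hD)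
      simp [LinearMap.mem_ker, LinearMap.comp_apply, this, h1]
  constructor
  · -- A → B
    intro hA
    refine le_antisymm incl2 ?_
    intro x hx
    have hx' : d' (d'' x) = 0 := hx
    -- Dx ∈ Ker d' ∩ Ker d'' ∩ Im D
    have hmem : d' x + d'' x ∈
        LinearMap.ker d' ⊓ LinearMap.ker d'' ⊓ LinearMap.range (d' + d'') := by
      refine ⟨⟨?_, ?_⟩, ⟨x, rfl⟩⟩
      · simp [LinearMap.mem_ker, map_add, h1, hx']
      · simp [LinearMap.mem_ker, map_add, h2, comm, hx']
    rw [hA] at hmem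
    obtain ⟨y, hy⟩ := hmem
    simp only [LinearMap.comp_apply] at hy
    -- x = d'' y + (x - d'' y), with x - d'' y ∈ Ker D
    have hker : x - d'' y ∈ LinearMap.ker (d' + d'') := by
      simp only [LinearMap.mem_ker, LinearMap.add_apply, map_sub, h2, hy]
      abel
    have : x = d'' y + (x - d'' y) := by abel
    rw [this]
    exact Submodule.add_mem_sup (Submodule.mem_sup_right ⟨y, rfl⟩) hker
  · -- B → A
    intro hB
    refine le_antisymm ?_ incl1
    rintro x ⟨⟨hx1, hx2⟩, w, hw⟩
    have hx1' : d' x = 0 := hx1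
    have hw' : d' w + d'' w = x := hw
    -- w ∈ Ker d'd''
    have hwker : w ∈ LinearMap.ker (d' ∘ₗ d'') := by
      have : d' (d' w + d'' w) = 0 := by rw [hw']; exact hx1'
      simpa [map_add, h1] using this
    rw [← hB] at hwker
    rw [sup_assoc] at hwker
    obtain ⟨a', ⟨a, rfl⟩, u, hu, hsum⟩ := Submodule.mem_sup.mp hwker
    obtain ⟨b', ⟨b, rfl⟩, c, hc, hsum2⟩ := Submodule.mem_sup.mp hu
    have hcD : d' c + d'' c = 0 := by simpa [LinearMap.add_apply] using hc
    refine ⟨b - a, ?_⟩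
    have hx : x = d' (d' a) + d'' (d' a) + (d' (d'' b) + d'' (d'' b)) + (d' c + d'' c) := by
      rw [← hw', ← hsum, ← hsum2]
      simp only [map_add]
      abel
    rw [h1, h2, hcD, comm] at hx
    simp only [LinearMap.comp_apply, map_sub]
    rw [hx]
    abel
end

section
/- Let (K^{•,•}, d', d'') be a bounded double cochain complex of modules. Then K satisfies the d'd''-lemma if and only if both Im(d'') + Ker(d') = Ker(d'd'') and Im(d') + Ker(d'') = Ker(d'd''). -/
/- STATEMENT 3: An equivalent characterization of the d'd''-lemma for a bounded
double cochain complex (K, d', d'') of modules with total differential D = d' + d''. -/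
theorem deligne_lemma_equiv_3 {R V : Type*} [CommRing R] [AddCommGroup V] [Module R V]
    (𝒦 : ℤ × ℤ → Submodule R V)
    (hinternal : DirectSum.IsInternal 𝒦)
    (hbounded : {pq : ℤ × ℤ | 𝒦 pq ≠ ⊥}.Finite)
    (d' d'' : V →ₗ[R] V)
    (hd'deg : ∀ p q : ℤ, ∀ x ∈ 𝒦 (p, q), d' x ∈ 𝒦 (p + 1, q))
    (hd''deg : ∀ p q : ℤ, ∀ x ∈ 𝒦 (p, q), d'' x ∈ 𝒦 (p, q + 1))
    (hd'sq : d' ∘ₗ d' = 0) (hd''sq : d'' ∘ₗ d'' = 0)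
    (hanti : d' ∘ₗ d'' + d'' ∘ₗ d' = 0) :
    (LinearMap.ker d' ⊓ LinearMap.ker d'' ⊓ LinearMap.range (d' + d'') =
        LinearMap.range (d' ∘ₗ d'')) ↔
      (LinearMap.range d'' ⊔ LinearMap.ker d' = LinearMap.ker (d' ∘ₗ d'') ∧ LinearMap.range d' ⊔ LinearMap.ker d'' = LinearMap.ker (d' ∘ₗ d'')) := by
  classical
  have pd' : ∀ v, d' (d' v) = 0 := fun v => by simpa using DFunLike.congr_fun hd'sq v
  have pd'' : ∀ v, d'' (d'' v) = 0 := fun v => by simpa using DFunLike.congr_fun hd''sq v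
  have panti : ∀ v, d' (d'' v) = - d'' (d' v) := fun v => by
    have h := DFunLike.congr_fun hanti v
    simp only [LinearMap.add_apply, LinearMap.comp_apply, LinearMap.zero_apply] at h
    exact eq_neg_of_add_eq_zero_left h
  -- easy inclusion: range d'' ⊔ ker d' ≤ ker (d' ∘ₗ d'')
  have easy1 : LinearMap.range d'' ⊔ LinearMap.ker d' ≤ LinearMap.ker (d' ∘ₗ d'') := by
    rw [sup_le_iff]
    constructor
    · rintro x ⟨z, rfl⟩
      simp [LinearMap.mem_ker, LinearMap.comp_apply, pd'']
    · intro x hx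
      have hx' : d' x = 0 := hx
      simp [LinearMap.mem_ker, LinearMap.comp_apply, panti, hx']
  have easy2 : LinearMap.range d' ⊔ LinearMap.ker d'' ≤ LinearMap.ker (d' ∘ₗ d'') := by
    rw [sup_le_iff]
    constructor
    · rintro x ⟨z, rfl⟩
      simp [LinearMap.mem_ker, LinearMap.comp_apply, panti, pd']
    · intro x hx
      have hx' : d'' x = 0 := hx
      simp [LinearMap.mem_ker, LinearMap.comp_apply, hx']
  constructor
  · -- forward direction
    intro hlem
    haveI : DirectSum.Decomposition 𝒦 := hinternal.chooseDecomposition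
    -- commutation of the projection with d' ∘ d''
    have hcomm : ∀ (a b : ℤ) (u : V),
        ((DirectSum.decompose 𝒦 (d' (d'' u))) (a, b) : V)
          = d' (d'' ((DirectSum.decompose 𝒦 u) (a - 1, b - 1) : V)) := by
      intro a b
      refine DirectSum.Decomposition.inductionOn 𝒦 ?_ ?_ ?_
      · simp
      · rintro ⟨c, e⟩ m
        have hm : (m : V) ∈ 𝒦 (c, e) := m.2
        have hm2 : d' (d'' (m : V)) ∈ 𝒦 (c + 1, e + 1) :=
          hd'deg c (e + 1) _ (hd''deg c e _ hm)
        by_cases h : ((c : ℤ), (e : ℤ)) = (a - 1, b - 1)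
        · have h1 : c = a - 1 := (Prod.mk.injEq _ _ _ _).mp h |>.1
          have h2 : e = b - 1 := (Prod.mk.injEq _ _ _ _).mp h |>.2
          have h3 : ((c + 1 : ℤ), (e + 1 : ℤ)) = (a, b) := by
            rw [h1, h2]; ext <;> simp <;> ring
          rw [← h, DirectSum.decompose_of_mem_same 𝒦 hm, ← h3,
            DirectSum.decompose_of_mem_same 𝒦 hm2]
        · have h3 : ((c + 1 : ℤ), (e + 1 : ℤ)) ≠ (a, b) := by
            intro hc
            apply h
            have c1 : c + 1 = a := (Prod.mk.injEq _ _ _ _).mp hc |>.1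
            have c2 : e + 1 = b := (Prod.mk.injEq _ _ _ _).mp hc |>.2
            ext <;> simp <;> omega
          rw [DirectSum.decompose_of_mem_ne 𝒦 hm2 h3,
            DirectSum.decompose_of_mem_ne 𝒦 hm h, map_zero, map_zero]
      · intro m m' hm hm'
        rw [map_add, map_add, DirectSum.decompose_add, DirectSum.decompose_add,
          DirectSum.add_apply, DirectSum.add_apply, Submodule.coe_add, Submodule.coe_add,
          hm, hm', map_add, map_add]
    -- main per-component lemma
    have compmem : ∀ (p q : ℤ) (w : V), w ∈ 𝒦 (p, q) → d' (d'' w) = 0 →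
        w ∈ (LinearMap.range d'' ⊔ LinearMap.ker d') ⊓
          (LinearMap.range d' ⊔ LinearMap.ker d'') := by
      intro p q w hw hcl
      have h1 : d' (d' w + d'' w) = 0 := by rw [map_add, pd', hcl, add_zero]
      have h2 : d'' (d' w + d'' w) = 0 := by
        rw [map_add, pd'', add_zero]
        have h := panti w
        rw [hcl] at h
        exact neg_eq_zero.mp h.symm
      have h3 : d' w + d'' w ∈ LinearMap.range (d' + d'') :=
        ⟨w, by simp [LinearMap.add_apply]⟩
      have hmem : d' w + d'' w ∈ LinearMap.range (d' ∘ₗ d'') := by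
        rw [← hlem]
        exact ⟨⟨h1, h2⟩, h3⟩
      obtain ⟨u, hu⟩ := hmem
      have hu' : d' (d'' u) = d' w + d'' w := hu
      have hd'w : d' w ∈ 𝒦 (p + 1, q) := hd'deg p q w hw
      have hd''w : d'' w ∈ 𝒦 (p, q + 1) := hd''deg p q w hw
      -- extract the (p+1, q) component
      have hne1 : ((p : ℤ), (q + 1 : ℤ)) ≠ (p + 1, q) := by
        intro hc; have := (Prod.mk.injEq _ _ _ _).mp hc |>.1; omega
      have hne2 : ((p + 1 : ℤ), (q : ℤ)) ≠ (p, q + 1) := by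
        intro hc; have := (Prod.mk.injEq _ _ _ _).mp hc |>.1; omega
      have hcomp1 : ((DirectSum.decompose 𝒦 (d' w + d'' w)) (p + 1, q) : V) = d' w := by
        rw [DirectSum.decompose_add, DirectSum.add_apply, Submodule.coe_add,
          DirectSum.decompose_of_mem_same 𝒦 hd'w,
          DirectSum.decompose_of_mem_ne 𝒦 hd''w hne1, add_zero]
      have hcomp2 : ((DirectSum.decompose 𝒦 (d' w + d'' w)) (p, q + 1) : V) = d'' w := by
        rw [DirectSum.decompose_add, DirectSum.add_apply, Submodule.coe_add,
          DirectSum.decompose_of_mem_same 𝒦 hd''w,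
          DirectSum.decompose_of_mem_ne 𝒦 hd'w hne2, zero_add]
      have hr1 : d' w = d' (d'' ((DirectSum.decompose 𝒦 u) (p + 1 - 1, q - 1) : V)) := by
        rw [← hcomp1, ← hu', hcomm (p + 1) q u]
      have hr2 : d'' w = d' (d'' ((DirectSum.decompose 𝒦 u) (p - 1, q + 1 - 1) : V)) := by
        rw [← hcomp2, ← hu', hcomm p (q + 1) u]
      set c : V := ((DirectSum.decompose 𝒦 u) (p + 1 - 1, q - 1) : V) with hc
      set e : V := ((DirectSum.decompose 𝒦 u) (p - 1, q + 1 - 1) : V) with he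
      constructor
      · -- w ∈ range d'' ⊔ ker d'
        apply Submodule.mem_sup.mpr
        refine ⟨d'' c, ⟨c, rfl⟩, w - d'' c, ?_, by abel⟩
        show d' (w - d'' c) = 0
        rw [map_sub, ← hr1, sub_self]
      · -- w ∈ range d' ⊔ ker d''
        apply Submodule.mem_sup.mpr
        refine ⟨d' (-e), ⟨-e, rfl⟩, w + d' e, ?_, by rw [map_neg]; abel⟩
        show d'' (w + d' e) = 0
        rw [map_add]
        have : d'' (d' e) = - d' (d'' e) := by
          rw [panti e, neg_neg]
        rw [this, ← hr2, add_neg_cancel]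
    have main : ∀ x ∈ LinearMap.ker (d' ∘ₗ d''),
        x ∈ (LinearMap.range d'' ⊔ LinearMap.ker d') ⊓
          (LinearMap.range d' ⊔ LinearMap.ker d'') := by
      intro x hx
      have hx' : d' (d'' x) = 0 := hx
      have hxsum := DirectSum.sum_support_decompose 𝒦 x
      rw [← hxsum]
      apply Submodule.sum_mem
      rintro ⟨p, q⟩ _
      refine compmem p q _ ((DirectSum.decompose 𝒦 x) (p, q)).2 ?_
      have := hcomm (p + 1) (q + 1) x
      rw [hx'] at this
      simp only [DirectSum.decompose_zero, DirectSum.zero_apply, ZeroMemClass.coe_zero] at this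
      have harg : ((p + 1 - 1 : ℤ), (q + 1 - 1 : ℤ)) = (p, q) := by ext <;> simp <;> ring
      rw [harg] at this
      exact this.symm
    constructor
    · exact le_antisymm easy1 (fun x hx => (Submodule.mem_inf.mp (main x hx)).1)
    · exact le_antisymm easy2 (fun x hx => (Submodule.mem_inf.mp (main x hx)).2)
  · -- backward direction
    rintro ⟨h1, h2⟩
    apply le_antisymm
    · rintro x hx
      obtain ⟨⟨hx1, hx2⟩, hx3⟩ := Submodule.mem_inf.mp hx
      have hx1' : d' x = 0 := hx1
      have hx2' : d'' x = 0 := hx2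
      obtain ⟨y, hy⟩ := hx3
      have hy' : d' y + d'' y = x := by rw [← hy]; simp [LinearMap.add_apply]
      have hyk : y ∈ LinearMap.ker (d' ∘ₗ d'') := by
        show d' (d'' y) = 0
        have : d' (d' y + d'' y) = 0 := by rw [hy', hx1']
        rw [map_add, pd', zero_add] at this
        exact this
      rw [← h1] at hyk
      obtain ⟨r, hr, k, hk, hsum⟩ := Submodule.mem_sup.mp hyk
      obtain ⟨a, ha⟩ := hr
      have hk' : d' k = 0 := hk
      have hkk : k ∈ LinearMap.ker (d' ∘ₗ d'') := by
        show d' (d'' k) = 0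
        rw [panti, hk', map_zero, neg_zero]
      rw [← h2] at hkk
      obtain ⟨s, hs, m, hm, hsum2⟩ := Submodule.mem_sup.mp hkk
      obtain ⟨b, hb⟩ := hs
      have hm' : d'' m = 0 := hm
      refine ⟨a - b, ?_⟩
      show d' (d'' (a - b)) = x
      have e1 : x = d' (d'' a) + d'' k := by
        rw [← hy', ← hsum, ← ha]
        rw [map_add, map_add, hk', pd'']
        abel
      have e2 : d'' k = - d' (d'' b) := by
        rw [← hsum2, ← hb, map_add, hm', add_zero]
        rw [panti b, neg_neg]
      rw [map_sub, map_sub, e1, e2]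
      abel
    · rintro x ⟨u, hu⟩
      have hu' : d' (d'' u) = x := hu
      refine Submodule.mem_inf.mpr ⟨Submodule.mem_inf.mpr ⟨?_, ?_⟩, ?_⟩
      · show d' x = 0
        rw [← hu', pd']
      · show d'' x = 0
        have h := panti (d'' u)
        rw [pd'', map_zero] at h
        rw [← hu', ← neg_neg (d'' (d' (d'' u))), ← h, neg_zero]
      · exact ⟨d'' u, by simp [LinearMap.add_apply, pd'', hu']⟩
end

section
/- Let V^{•,•} be a Z²-graded vector space over a field K with two anticommuting square-zero endomorphisms δ₁ of bidegree (1,0) and δ₂ of bidegree (0,1), such that for i = 1,2 the δᵢ-cohomology of the associated total complex is finite dimensional in each degree. Then for every j ∈ Z: dim H^j_{BC}(V) + dim H^j_A(V) ≥ dim H^j_{δ₁}(V) + dim H^j_{δ₂}(V), where H_{BC} = (Ker δ₁ ∩ Ker δ₂)/Im(δ₁δ₂) and H_A = Ker(δ₁δ₂)/(Im δ₁ + Im δ₂). -/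
open LinearMap

/-- The (cardinal) dimension of the quotient `A / (A ∩ B)` of submodules,
used to express cohomology in a fixed (total) degree: e.g. the Bott-Chern
cohomology in degree `j` is `(Ker δ₁ ∩ Ker δ₂ ∩ V^j) / Im(δ₁δ₂)`. -/
noncomputable def qrank {K V : Type*} [Field K] [AddCommGroup V] [Module K V]
    (A B : Submodule K V) : Cardinal :=
  Module.rank K (↥A ⧸ B.comap A.subtype)

/-- The total-degree-`j` piece `V^j = ⨁_{p+q=j} V^{p,q}` of a `ℤ²`-graded space. -/
def totalPiece {K V : Type*} [Field K] [AddCommGroup V] [Module K V]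
    (𝒱 : ℤ × ℤ → Submodule K V) (j : ℤ) : Submodule K V :=
  ⨆ p : ℤ, 𝒱 (p, j - p)

open Submodule

/-!
The maps `H_BC → H_δ₁ × H_δ₂ → H_A`, `[c] ↦ ([c], [c])` and `([a], [b]) ↦ [a] - [b]`, form a
complex that is exact in the middle, so by rank–nullity the middle term has rank at most the sum
of the outer two. For exactness, if `a - b = δ₁ u + δ₂ v` then `c = a - δ₁ u = b + δ₂ v` is closed
for both differentials. It lies in total degree `j` once `δ₁ u` and `δ₂ v` are replaced by their
components of degree `j`; these are still in `Im δ₁` and `Im δ₂` because the projection onto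
degree `j` intertwines `δᵢ` with the projection onto degree `j - 1`.
-/

universe u

theorem rank_le_rank_add_rank_of_ker_le_range {K : Type*} {A B C : Type u} [DivisionRing K]
    [AddCommGroup A] [Module K A] [AddCommGroup B] [Module K B] [AddCommGroup C] [Module K C]
    (f : A →ₗ[K] B) (g : B →ₗ[K] C) (hfg : ker g ≤ range f) :
    Module.rank K B ≤ Module.rank K A + Module.rank K C :=
  calc Module.rank K B = Module.rank K (range g) + Module.rank K (ker g) :=
        (rank_range_add_rank_ker g).symm
    _ ≤ Module.rank K C + Module.rank K A :=
        add_le_add (range g).rank_le ((Submodule.rank_mono hfg).trans (rank_range_le f))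
    _ = Module.rank K A + Module.rank K C := add_comm _ _

theorem LinearMap.IsProj.sup_inf_le {K V : Type*} [Semiring K] [AddCommMonoid V] [Module K V]
    {W M N : Submodule K V} {π : V →ₗ[K] V} (hπ : IsProj W π)
    (hM : M ≤ M.comap π) (hN : N ≤ N.comap π) :
    (M ⊔ N) ⊓ W ≤ M ⊓ W ⊔ N ⊓ W := by
  rintro x ⟨hMN, hW⟩
  obtain ⟨m, hm, n, hn, rfl⟩ := mem_sup.mp hMN
  rw [← hπ.map_id _ hW, map_add]
  exact add_mem_sup ⟨hM hm, hπ.map_mem m⟩ ⟨hN hn, hπ.map_mem n⟩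

section GradedProjection

variable {K V ι : Type*} [Ring K] [AddCommGroup V] [Module K V] [DecidableEq ι]
  {𝒱 : ι → Submodule K V} (h𝒱 : DirectSum.IsInternal 𝒱) (S : Set ι)

include h𝒱 in
theorem DirectSum.IsInternal.linearMap_ext {M : Type*} [AddCommGroup M] [Module K M]
    {f g : V →ₗ[K] M} (hfg : ∀ i, ∀ x ∈ 𝒱 i, f x = g x) : f = g := by
  refine LinearMap.ext fun x => ?_
  have hx : x ∈ ⨆ i, 𝒱 i := h𝒱.submodule_iSup_eq_top ▸ Submodule.mem_top
  exact (iSup_le fun i x hx => hfg i x hx : ⨆ i, 𝒱 i ≤ eqLocus f g) hx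

open scoped Classical in
noncomputable def DirectSum.IsInternal.proj : V →ₗ[K] V :=
  DirectSum.toModule K ι V (fun i => if i ∈ S then (𝒱 i).subtype else 0) ∘ₗ
    (LinearEquiv.ofBijective (DirectSum.coeLinearMap 𝒱) h𝒱).symm.toLinearMap

open scoped Classical in
theorem DirectSum.IsInternal.proj_of_mem {i : ι} {x : V} (hx : x ∈ 𝒱 i) :
    h𝒱.proj S x = if i ∈ S then x else 0 := by
  have hsymm : (LinearEquiv.ofBijective (DirectSum.coeLinearMap 𝒱) h𝒱).symm x =
      DirectSum.lof K ι (fun i => 𝒱 i) i ⟨x, hx⟩ := by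
    rw [LinearEquiv.symm_apply_eq]
    exact (DirectSum.coeLinearMap_lof 𝒱 i ⟨x, hx⟩).symm
  rw [proj, LinearMap.comp_apply, LinearEquiv.coe_coe, hsymm, DirectSum.toModule_lof]
  split_ifs <;> rfl

theorem DirectSum.IsInternal.isProj_proj : IsProj (⨆ i ∈ S, 𝒱 i) (h𝒱.proj S) := by
  constructor
  · intro x
    have hx : x ∈ ⨆ i, 𝒱 i := h𝒱.submodule_iSup_eq_top ▸ Submodule.mem_top
    refine (iSup_le fun i y hy => ?_ : ⨆ i, 𝒱 i ≤ (⨆ i ∈ S, 𝒱 i).comap (h𝒱.proj S)) hx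
    rw [mem_comap, h𝒱.proj_of_mem S hy]
    split_ifs with hi
    · exact le_iSup₂ (f := fun i (_ : i ∈ S) => 𝒱 i) i hi hy
    · exact zero_mem _
  · intro x hx
    refine (iSup₂_le fun i hi y hy => ?_ : ⨆ i ∈ S, 𝒱 i ≤ eqLocus (h𝒱.proj S) LinearMap.id) hx
    rw [mem_eqLocus, h𝒱.proj_of_mem S hy, if_pos hi, LinearMap.id_apply]

theorem DirectSum.IsInternal.proj_comp {δ : V →ₗ[K] V} {σ : ι → ι}
    (hδ : ∀ i, ∀ x ∈ 𝒱 i, δ x ∈ 𝒱 (σ i)) :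
    h𝒱.proj S ∘ₗ δ = δ ∘ₗ h𝒱.proj (σ ⁻¹' S) := by
  refine h𝒱.linearMap_ext fun i x hx => ?_
  rw [comp_apply, comp_apply, h𝒱.proj_of_mem S (hδ i x hx), h𝒱.proj_of_mem _ hx]
  split_ifs <;> simp_all

theorem DirectSum.IsInternal.range_le_comap_proj {δ : V →ₗ[K] V} {σ : ι → ι}
    (hδ : ∀ i, ∀ x ∈ 𝒱 i, δ x ∈ 𝒱 (σ i)) :
    range δ ≤ (range δ).comap (h𝒱.proj S) := by
  rintro _ ⟨x, rfl⟩
  exact ⟨h𝒱.proj (σ ⁻¹' S) x, (LinearMap.congr_fun (h𝒱.proj_comp S hδ) x).symm⟩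

end GradedProjection

section Subquotient

variable {K V : Type*} [Ring K] [AddCommGroup V] [Module K V]

abbrev Subquotient (A B : Submodule K V) : Type _ := ↥A ⧸ B.comap A.subtype

variable {A A' B B' : Submodule K V}

def Subquotient.map (hA : A ≤ A') (hB : B ≤ B') : Subquotient A B →ₗ[K] Subquotient A' B' :=
  mapQ _ _ (inclusion hA) fun _ hx => hB hx

@[simp]
theorem Subquotient.map_mk (hA : A ≤ A') (hB : B ≤ B') (a : A) :
    Subquotient.map hA hB (Submodule.Quotient.mk a) = Submodule.Quotient.mk (inclusion hA a) :=
  rfl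

theorem Subquotient.mk_eq_mk_iff {a b : A} :
    (Submodule.Quotient.mk a : Subquotient A B) = Submodule.Quotient.mk b ↔ (a : V) - b ∈ B :=
  Submodule.Quotient.eq _

end Subquotient

section DoubleComplex

variable {K V : Type*} [Ring K] [AddCommGroup V] [Module K V] {δ₁ δ₂ : V →ₗ[K] V}
  (h12 : δ₁ ∘ₗ δ₂ + δ₂ ∘ₗ δ₁ = 0)

include h12 in
theorem ker_le_ker_comp_of_anticomm : ker δ₁ ≤ ker (δ₁ ∘ₗ δ₂) := by
  rw [eq_neg_of_add_eq_zero_left h12, ker_neg]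
  exact ker_le_ker_comp δ₁ δ₂

include h12 in
theorem range_comp_le_range_of_anticomm : range (δ₁ ∘ₗ δ₂) ≤ range δ₂ := by
  rw [eq_neg_of_add_eq_zero_left h12, range_neg]
  exact range_comp_le_range δ₁ δ₂

variable (W : Submodule K V)

noncomputable def bottChernToProd :
    Subquotient (ker δ₁ ⊓ ker δ₂ ⊓ W) (range (δ₁ ∘ₗ δ₂)) →ₗ[K]
      Subquotient (ker δ₁ ⊓ W) (range δ₁) × Subquotient (ker δ₂ ⊓ W) (range δ₂) :=
  (Subquotient.map (inf_le_inf_right W inf_le_left) (range_comp_le_range δ₂ δ₁)).prod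
    (Subquotient.map (inf_le_inf_right W inf_le_right) (range_comp_le_range_of_anticomm h12))

noncomputable def prodToAeppli :
    Subquotient (ker δ₁ ⊓ W) (range δ₁) × Subquotient (ker δ₂ ⊓ W) (range δ₂) →ₗ[K]
      Subquotient (ker (δ₁ ∘ₗ δ₂) ⊓ W) (range δ₁ ⊔ range δ₂) :=
  (Subquotient.map (inf_le_inf_right W (ker_le_ker_comp_of_anticomm h12)) le_sup_left).coprod
    (-Subquotient.map (inf_le_inf_right W (ker_le_ker_comp δ₂ δ₁)) le_sup_right)

variable {W}

theorem exists_bottChern_of_sub_mem (hsq₁ : δ₁ ∘ₗ δ₁ = 0) (hsq₂ : δ₂ ∘ₗ δ₂ = 0)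
    (hW : (range δ₁ ⊔ range δ₂) ⊓ W ≤ range δ₁ ⊓ W ⊔ range δ₂ ⊓ W)
    {a b : V} (ha : a ∈ ker δ₁ ⊓ W) (hb : b ∈ ker δ₂ ⊓ W) (hab : a - b ∈ range δ₁ ⊔ range δ₂) :
    ∃ c ∈ ker δ₁ ⊓ ker δ₂ ⊓ W, c - a ∈ range δ₁ ∧ c - b ∈ range δ₂ := by
  obtain ⟨x₁, ⟨⟨u, rfl⟩, hx₁W⟩, x₂, ⟨⟨v, rfl⟩, -⟩, hsum⟩ :=
    mem_sup.mp (hW ⟨hab, sub_mem ha.2 hb.2⟩)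
  have hc : a - δ₁ u = b + δ₂ v := calc
    a - δ₁ u = b + (a - b - δ₁ u) := by abel
    _ = b + δ₂ v := by rw [← hsum]; abel
  refine ⟨a - δ₁ u, ⟨⟨?_, ?_⟩, sub_mem ha.2 hx₁W⟩, ⟨-u, by simp⟩, ⟨v, by simp [hc]⟩⟩
  · simp [mem_ker.mp ha.1, ← comp_apply, hsq₁]
  · simp [hc, mem_ker.mp hb.1, ← comp_apply, hsq₂]

theorem ker_prodToAeppli_le_range_bottChernToProd (hsq₁ : δ₁ ∘ₗ δ₁ = 0) (hsq₂ : δ₂ ∘ₗ δ₂ = 0)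
    (hW : (range δ₁ ⊔ range δ₂) ⊓ W ≤ range δ₁ ⊓ W ⊔ range δ₂ ⊓ W) :
    ker (prodToAeppli h12 W) ≤ range (bottChernToProd h12 W) := by
  rintro ⟨q₁, q₂⟩ hq
  obtain ⟨a, rfl⟩ := Submodule.Quotient.mk_surjective _ q₁
  obtain ⟨b, rfl⟩ := Submodule.Quotient.mk_surjective _ q₂
  rw [mem_ker, prodToAeppli, coprod_apply, LinearMap.neg_apply, add_neg_eq_zero,
    Subquotient.map_mk, Subquotient.map_mk, Subquotient.mk_eq_mk_iff] at hq
  obtain ⟨c, hc, hca, hcb⟩ := exists_bottChern_of_sub_mem hsq₁ hsq₂ hW a.2 b.2 hq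
  refine ⟨Submodule.Quotient.mk ⟨c, hc⟩, ?_⟩
  rw [bottChernToProd, prod_apply, Function.prod, Subquotient.map_mk, Subquotient.map_mk]
  exact Prod.ext (Subquotient.mk_eq_mk_iff.mpr hca) (Subquotient.mk_eq_mk_iff.mpr hcb)

end DoubleComplex

theorem qrank_add_qrank_le_of_sup_range_inf_le {K V : Type*} [Field K] [AddCommGroup V]
    [Module K V] {δ₁ δ₂ : V →ₗ[K] V} {W : Submodule K V}
    (hsq₁ : δ₁ ∘ₗ δ₁ = 0) (hsq₂ : δ₂ ∘ₗ δ₂ = 0) (h12 : δ₁ ∘ₗ δ₂ + δ₂ ∘ₗ δ₁ = 0)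
    (hW : (range δ₁ ⊔ range δ₂) ⊓ W ≤ range δ₁ ⊓ W ⊔ range δ₂ ⊓ W) :
    qrank (ker δ₁ ⊓ W) (range δ₁) + qrank (ker δ₂ ⊓ W) (range δ₂) ≤
      qrank (ker δ₁ ⊓ ker δ₂ ⊓ W) (range (δ₁ ∘ₗ δ₂)) +
        qrank (ker (δ₁ ∘ₗ δ₂) ⊓ W) (range δ₁ ⊔ range δ₂) :=
  rank_prod'.symm.trans_le <| rank_le_rank_add_rank_of_ker_le_range _ _ <|
    ker_prodToAeppli_le_range_bottChernToProd h12 hsq₁ hsq₂ hW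

theorem totalPiece_eq_biSup {K V : Type*} [Field K] [AddCommGroup V] [Module K V]
    (𝒱 : ℤ × ℤ → Submodule K V) (j : ℤ) :
    totalPiece 𝒱 j = ⨆ i ∈ {i : ℤ × ℤ | i.1 + i.2 = j}, 𝒱 i := by
  refine le_antisymm (iSup_le fun p => ?_) (iSup₂_le fun i hi => ?_)
  · exact le_iSup₂ (f := fun i (_ : i.1 + i.2 = j) => 𝒱 i) (p, j - p) (add_sub_cancel p j)
  · obtain ⟨p, q⟩ := i
    obtain rfl : q = j - p := by change p + q = j at hi; omega
    exact le_iSup (fun p => 𝒱 (p, j - p)) p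

theorem frolicher_type_inequality_bigraded_general
    {K V : Type*} [Field K] [AddCommGroup V] [Module K V]
    (𝒱 : ℤ × ℤ → Submodule K V) (hinternal : DirectSum.IsInternal 𝒱)
    (δ₁ δ₂ : V →ₗ[K] V)
    (hδ₁deg : ∀ p q : ℤ, ∀ x ∈ 𝒱 (p, q), δ₁ x ∈ 𝒱 (p + 1, q))
    (hδ₂deg : ∀ p q : ℤ, ∀ x ∈ 𝒱 (p, q), δ₂ x ∈ 𝒱 (p, q + 1))
    (h1 : δ₁ ∘ₗ δ₁ = 0) (h2 : δ₂ ∘ₗ δ₂ = 0) (h12 : δ₁ ∘ₗ δ₂ + δ₂ ∘ₗ δ₁ = 0) :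
    ∀ j : ℤ,
      qrank (ker δ₁ ⊓ totalPiece 𝒱 j) (range δ₁) +
          qrank (ker δ₂ ⊓ totalPiece 𝒱 j) (range δ₂) ≤
        qrank (ker δ₁ ⊓ ker δ₂ ⊓ totalPiece 𝒱 j) (range (δ₁ ∘ₗ δ₂)) +
          qrank (ker (δ₁ ∘ₗ δ₂) ⊓ totalPiece 𝒱 j) (range δ₁ ⊔ range δ₂) := by
  intro j
  refine qrank_add_qrank_le_of_sup_range_inf_le h1 h2 h12 ?_
  rw [totalPiece_eq_biSup]
  exact (hinternal.isProj_proj _).sup_inf_le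
    (hinternal.range_le_comap_proj _ fun i => hδ₁deg i.1 i.2)
    (hinternal.range_le_comap_proj _ fun i => hδ₂deg i.1 i.2)

theorem frolicher_type_inequality_bigraded
    {K V : Type*} [Field K] [AddCommGroup V] [Module K V]
    (𝒱 : ℤ × ℤ → Submodule K V) (hinternal : DirectSum.IsInternal 𝒱)
    (δ₁ δ₂ : V →ₗ[K] V)
    (hδ₁deg : ∀ p q : ℤ, ∀ x ∈ 𝒱 (p, q), δ₁ x ∈ 𝒱 (p + 1, q))
    (hδ₂deg : ∀ p q : ℤ, ∀ x ∈ 𝒱 (p, q), δ₂ x ∈ 𝒱 (p, q + 1))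
    (h1 : δ₁ ∘ₗ δ₁ = 0) (h2 : δ₂ ∘ₗ δ₂ = 0) (h12 : δ₁ ∘ₗ δ₂ + δ₂ ∘ₗ δ₁ = 0)
    (hfin : ∀ j : ℤ,
      qrank (ker δ₁ ⊓ totalPiece 𝒱 j) (range δ₁) < Cardinal.aleph0 ∧
      qrank (ker δ₂ ⊓ totalPiece 𝒱 j) (range δ₂) < Cardinal.aleph0) :
    ∀ j : ℤ,
      qrank (ker δ₁ ⊓ totalPiece 𝒱 j) (range δ₁) +
          qrank (ker δ₂ ⊓ totalPiece 𝒱 j) (range δ₂) ≤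
        qrank (ker δ₁ ⊓ ker δ₂ ⊓ totalPiece 𝒱 j) (range (δ₁ ∘ₗ δ₂)) +
          qrank (ker (δ₁ ∘ₗ δ₂) ⊓ totalPiece 𝒱 j) (range δ₁ ⊔ range δ₂) :=
  frolicher_type_inequality_bigraded_general 𝒱 hinternal δ₁ δ₂ hδ₁deg hδ₂deg h1 h2 h12
end

section
/- Let V be an inner product space carrying anticommuting square-zero operators ∂, ∂̄ with adjoints, satisfying the Kähler identities so that the Laplacians Δ = dd* + d*d (d = ∂+∂̄), Δ_∂ and Δ_∂̄ have pairwise equal kernels, and suppose Hodge decompositions hold: V = Ker Δ_∂ ⊕ Im ∂ ⊕ Im ∂* and V = Ker Δ_∂̄ ⊕ Im ∂̄ ⊕ Im ∂̄*, with V = Ker Δ ⊕ Im d ⊕ Im d*. Then any form α that is ∂-closed, ∂̄-closed and d-exact lies in Im(∂∂̄). -/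
/-!
Decompose `α` along the `∂̄`-Hodge decomposition. As `α` is `∂̄`-closed, `α = h + ∂̄x` with `h`
harmonic; by the Kähler identity `h` is also `∂`-harmonic, so it is orthogonal to the `d`-exact
form `α` and to `∂̄x`, hence `h = 0`. Decomposing `x = h' + ∂u + ∂*v` along `∂`, the term `∂̄h'`
vanishes, and `∂α = 0` together with `∂̄∂* = -∂*∂̄` forces `∂̄∂*v = 0`. So `α = ∂̄∂u = ∂∂̄(-u)`.
-/

open LinearMap

section Adjoint

variable {V : Type*} [NormedAddCommGroup V] [InnerProductSpace ℂ V] {A As : V →ₗ[ℂ] V}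

lemma inner_adjoint_apply_left (hadj : ∀ x y : V, inner ℂ (A x) y = inner ℂ x (As y))
    (x y : V) : inner ℂ (As x) y = inner ℂ x (A y) := by
  rw [← inner_conj_symm, ← hadj, inner_conj_symm]

lemma adjoint_apply_eq_zero_of_apply_adjoint_apply_eq_zero
    (hadj : ∀ x y : V, inner ℂ (A x) y = inner ℂ x (As y)) {z : V} (hz : A (As z) = 0) :
    As z = 0 :=
  inner_self_eq_zero.mp (by rw [← hadj, hz, inner_zero_left])

lemma apply_eq_zero_and_adjoint_apply_eq_zero_of_mem_ker_laplacian
    (hadj : ∀ x y : V, inner ℂ (A x) y = inner ℂ x (As y)) {h : V}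
    (hh : h ∈ ker (A ∘ₗ As + As ∘ₗ A)) : A h = 0 ∧ As h = 0 := by
  have hΔ : A (As h) + As (A h) = 0 := by simpa using hh
  have hnorm : ‖As h‖ ^ 2 + ‖A h‖ ^ 2 = 0 := by
    have : inner ℂ (As h) (As h) + inner ℂ (A h) (A h) = 0 := by
      rw [← hadj (As h), ← inner_adjoint_apply_left hadj (A h), ← inner_add_left, hΔ,
        inner_zero_left]
    simpa only [map_add, inner_self_eq_norm_sq, map_zero] using congrArg RCLike.re this
  rw [add_eq_zero_iff_of_nonneg (sq_nonneg _) (sq_nonneg _)] at hnorm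
  simpa using And.symm hnorm

lemma exists_eq_harmonic_add_add (hdec : ker (A ∘ₗ As + As ∘ₗ A) ⊔ range A ⊔ range As = ⊤)
    (x : V) : ∃ h ∈ ker (A ∘ₗ As + As ∘ₗ A), ∃ u v, x = h + A u + As v := by
  have hx : x ∈ ker (A ∘ₗ As + As ∘ₗ A) ⊔ range A ⊔ range As := hdec ▸ Submodule.mem_top
  obtain ⟨_, hw, _, ⟨v, rfl⟩, rfl⟩ := Submodule.mem_sup.mp hx
  obtain ⟨h, hh, _, ⟨u, rfl⟩, rfl⟩ := Submodule.mem_sup.mp hw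
  exact ⟨h, hh, u, v, rfl⟩

lemma exists_eq_harmonic_add_of_apply_eq_zero (hA : A ∘ₗ A = 0)
    (hadj : ∀ x y : V, inner ℂ (A x) y = inner ℂ x (As y))
    (hdec : ker (A ∘ₗ As + As ∘ₗ A) ⊔ range A ⊔ range As = ⊤) {α : V} (hα : A α = 0) :
    ∃ h ∈ ker (A ∘ₗ As + As ∘ₗ A), ∃ x, α = h + A x := by
  obtain ⟨h, hh, x, y, rfl⟩ := exists_eq_harmonic_add_add hdec α
  have hAA : A (A x) = 0 := by simpa using congr($hA x)
  have hAh := (apply_eq_zero_and_adjoint_apply_eq_zero_of_mem_ker_laplacian hadj hh).1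
  have hy : As y = 0 := adjoint_apply_eq_zero_of_apply_adjoint_apply_eq_zero hadj
    (by simpa [hAA, hAh] using hα)
  exact ⟨h, hh, x, by rw [hy, add_zero]⟩

end Adjoint

theorem del_delbar_lemma_from_hodge_theory_general
    {V : Type*} [NormedAddCommGroup V] [InnerProductSpace ℂ V]
    (p pb ps pbs : V →ₗ[ℂ] V)
    (hpsq : p ∘ₗ p = 0) (hpbsq : pb ∘ₗ pb = 0)
    (hanti : p ∘ₗ pb + pb ∘ₗ p = 0)
    (hadj : ∀ x y : V, (inner ℂ (p x) y : ℂ) = inner ℂ x (ps y))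
    (hadjb : ∀ x y : V, (inner ℂ (pb x) y : ℂ) = inner ℂ x (pbs y))
    (hker2 : ker (p ∘ₗ ps + ps ∘ₗ p) = ker (pb ∘ₗ pbs + pbs ∘ₗ pb))
    (hcomm : pb ∘ₗ ps = -(ps ∘ₗ pb))
    (hdec : ker (p ∘ₗ ps + ps ∘ₗ p) ⊔ range p ⊔ range ps = ⊤)
    (hdecb : ker (pb ∘ₗ pbs + pbs ∘ₗ pb) ⊔ range pb ⊔ range pbs = ⊤) :
    ∀ α : V, p α = 0 → pb α = 0 → α ∈ range (p + pb) → α ∈ range (p ∘ₗ pb) := by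
  have hanti' (z : V) : pb (p z) = -p (pb z) := by
    simpa [eq_neg_iff_add_eq_zero, add_comm] using congr($hanti z)
  have hpp (z : V) : p (p z) = 0 := by simpa using congr($hpsq z)
  have hcomm' (z : V) : pb (ps z) = -ps (pb z) := by simpa using congr($hcomm z)
  rintro α hpα hpbα ⟨β, rfl⟩
  obtain ⟨h, hh, x, hα⟩ := exists_eq_harmonic_add_of_apply_eq_zero hpbsq hadjb hdecb hpbα
  have hpsh := (apply_eq_zero_and_adjoint_apply_eq_zero_of_mem_ker_laplacian hadj
    (hker2 ▸ hh)).2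
  have hpbsh := (apply_eq_zero_and_adjoint_apply_eq_zero_of_mem_ker_laplacian hadjb hh).2
  obtain rfl : h = 0 := by
    refine inner_self_eq_zero (𝕜 := ℂ) |>.mp ?_
    have hdβ : inner ℂ ((p + pb) β) h = 0 := by
      rw [LinearMap.add_apply, inner_add_left, hadj, hadjb, hpsh, hpbsh, inner_zero_right,
        add_zero]
    rwa [hα, inner_add_left, hadjb, hpbsh, inner_zero_right, add_zero] at hdβ
  rw [hα, zero_add] at hpα ⊢
  obtain ⟨h', hh', u, v, rfl⟩ := exists_eq_harmonic_add_add hdec x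
  have hpbh' := (apply_eq_zero_and_adjoint_apply_eq_zero_of_mem_ker_laplacian hadjb
    (hker2 ▸ hh')).1
  have hpsv : pb (ps v) = 0 := by
    have : p (ps (pb v)) = 0 := by simpa [hpbh', hanti', hpp, hcomm'] using hpα
    rw [hcomm', adjoint_apply_eq_zero_of_apply_adjoint_apply_eq_zero hadj this, neg_zero]
  exact ⟨-u, by simp [hpbh', hpsv, hanti']⟩

theorem del_delbar_lemma_from_hodge_theory
    {V : Type*} [NormedAddCommGroup V] [InnerProductSpace ℂ V]
    (p pb ps pbs : V →ₗ[ℂ] V)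
    (hpsq : p ∘ₗ p = 0) (hpbsq : pb ∘ₗ pb = 0)
    (hanti : p ∘ₗ pb + pb ∘ₗ p = 0)
    (hadj : ∀ x y : V, (inner ℂ (p x) y : ℂ) = inner ℂ x (ps y))
    (hadjb : ∀ x y : V, (inner ℂ (pb x) y : ℂ) = inner ℂ x (pbs y))
    (hker1 : ker ((p + pb) ∘ₗ (ps + pbs) + (ps + pbs) ∘ₗ (p + pb)) =
      ker (p ∘ₗ ps + ps ∘ₗ p))
    (hker2 : ker (p ∘ₗ ps + ps ∘ₗ p) = ker (pb ∘ₗ pbs + pbs ∘ₗ pb))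
    (hcomm : pb ∘ₗ ps = -(ps ∘ₗ pb))
    (hdec : ker (p ∘ₗ ps + ps ∘ₗ p) ⊔ range p ⊔ range ps = ⊤)
    (hdecb : ker (pb ∘ₗ pbs + pbs ∘ₗ pb) ⊔ range pb ⊔ range pbs = ⊤)
    (hdecd : ker ((p + pb) ∘ₗ (ps + pbs) + (ps + pbs) ∘ₗ (p + pb)) ⊔
        range (p + pb) ⊔ range (ps + pbs) = ⊤) :
    ∀ α : V, p α = 0 → pb α = 0 → α ∈ range (p + pb) → α ∈ range (p ∘ₗ pb) :=
  del_delbar_lemma_from_hodge_theory_general p pb ps pbs hpsq hpbsq hanti hadj hadjb hker2 hcomm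
    hdec hdecb
end
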